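/- The topological group G, with the subspace topology inherited from lim← G_n, is not a Baire space: G is a countable union of closed subsets each having empty interior in G. -/

import Mathlib

/-!
Setting: `H 1, H 2, …` is a sequence of nontrivial groups (`H 0` is an unused dummy
factor).  `Gₙ = H 1 ∗ ⋯ ∗ H n` is realized canonically as the set of elements of the big
free product `Monoid.CoprodI H` whose reduced word only uses letters of type `i` with
`1 ≤ i ≤ n` (in particular `G₀` is trivial).  `ψ n : G (n+1) → G n` is realized as the
homomorphism of the big free product which is the identity on each `H i` with `i ≤ n`
and kills all the other factors.  The inverse limit `lim← Gₙ` is the set of sequences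
`f` with `f n ∈ Gₙ` and `ψ n (f (n+1)) = f n`; since each `Gₙ` is discrete it carries the
topology inherited from the product of discrete topologies (we give the big free product
the discrete topology `⊥`).
-/

noncomputable section

/-- The reduced word of an element of the free product, as a list of letters. -/
noncomputable def redWord {H : ℕ → Type*} [∀ i, Group (H i)] (g : Monoid.CoprodI H) :
    List (Σ i, H i) :=
  letI : ∀ i, DecidableEq (H i) := fun _ => Classical.decEq _
  (Monoid.CoprodI.Word.equiv g).toList

/-- `kappa m g` : the (possibly unreduced) word obtained by deleting from the reduced
word of `g` all letters of type `i` with `i ≥ m + 1`. -/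
noncomputable def kappa {H : ℕ → Type*} [∀ i, Group (H i)] (m : ℕ) (g : Monoid.CoprodI H) :
    List (Σ i, H i) :=
  (redWord g).filter (fun l => decide (l.1 ≤ m))

/-- `ψ n`, extended to the whole free product: the homomorphism which is the identity on
each factor `H i` with `i ≤ n` and kills all factors `H i` with `i > n`. -/
noncomputable def psi {H : ℕ → Type*} [∀ i, Group (H i)] (n : ℕ) :
    Monoid.CoprodI H →* Monoid.CoprodI H :=
  Monoid.CoprodI.lift (fun i => if i ≤ n then (Monoid.CoprodI.of : H i →* Monoid.CoprodI H) else 1)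

/-- Each group `Gₙ` (and hence the big free product) is given the discrete topology. -/
instance (H : ℕ → Type*) [∀ i, Group (H i)] : TopologicalSpace (Monoid.CoprodI H) := ⊥

/-- The inverse limit `lim← Gₙ`:  sequences `(w₀, w₁, w₂, …)` with `wₙ ∈ Gₙ`
(i.e. the reduced word of `wₙ` uses only letters of type `i` with `1 ≤ i ≤ n`; the `n = 0`
term is the trivial dummy extension of the inverse system) satisfying `ψ n (w (n+1)) = w n`.
As a subset of the product `Π n, CoprodI H` of discrete spaces it carries the product
(subspace) topology. -/
def invLim (H : ℕ → Type*) [∀ i, Group (H i)] : Set (ℕ → Monoid.CoprodI H) :=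
  {f | (∀ n, ∀ l ∈ redWord (f n), 1 ≤ l.1 ∧ l.1 ≤ n) ∧ ∀ n, psi n (f (n + 1)) = f n}

/-- The fiber `σ⁻¹(N)`:  those `(wₙ) ∈ lim← Gₙ` such that `κ₁(wₙ) = κ₁(w_N)` for all
`n ≥ N`, and either `N = 1` or `κ₁(w_{N-1}) ≠ κ₁(w_N)`. -/
def sigmaFiber (H : ℕ → Type*) [∀ i, Group (H i)] (N : ℕ) : Set (invLim H) :=
  {f | (∀ n, N ≤ n → kappa 1 (f.1 n) = kappa 1 (f.1 N)) ∧
    (N = 1 ∨ kappa 1 (f.1 (N - 1)) ≠ kappa 1 (f.1 N))}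


/-- The subgroup `G ⊆ lim← Gₙ` of sequences `(wₙ)` such that for each `m ≥ 1` the
sequence of words `κ_m(w₁), κ_m(w₂), …` is eventually constant.  It carries the subspace
topology from `lim← Gₙ`. -/
def bigG (H : ℕ → Type*) [∀ i, Group (H i)] : Set (invLim H) :=
  {f | ∀ m, 1 ≤ m → ∃ N, ∀ n, N ≤ n → kappa m (f.1 n) = kappa m (f.1 N)}


/-!
Every point of `G` has a least index `N ≥ 1` from which `κ₁` is constant, so `G` is the countable
union of the closed fibres `σ⁻¹(N)`. No fibre has interior: given `(wₙ)` and `K ≥ N`, the sequence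
that equals `wₙ` for `n ≤ K` and is constantly `w_K ⁅b, a⁆` afterwards (`1 ≠ a ∈ H₁`,
`1 ≠ b ∈ H_{K+1}`) lies in `G`, agrees with `(wₙ)` on the first `K` coordinates, and leaves
`σ⁻¹(N)`: `ψ_K` kills `b`, hence the commutator, while the reduced word gains the letters `a, a⁻¹`
of `H₁`, so `κ₁` jumps at `K + 1`.
-/

open Monoid Monoid.CoprodI Filter Set Topology
open scoped commutatorElement

theorem exists_stabilization_index {α : Type*} (u : ℕ → α)
    (hu : ∃ N, ∀ n, N ≤ n → u n = u N) :
    ∃ N, (∀ n, N ≤ n → u n = u N) ∧ (N = 1 ∨ u (N - 1) ≠ u N) := by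
  classical
  have hex : ∃ M, 1 ≤ M ∧ ∀ n, M ≤ n → u n = u M := by
    obtain ⟨N, hN⟩ := hu
    exact ⟨N + 1, by omega, fun n hn => by rw [hN n (by omega), hN (N + 1) (by omega)]⟩
  obtain ⟨hM1, hM⟩ := Nat.find_spec hex
  refine ⟨Nat.find hex, hM, or_iff_not_imp_left.2 fun hne heq => ?_⟩
  refine Nat.find_min hex (Nat.sub_lt hM1 one_pos) ⟨by omega, fun n hn => ?_⟩
  rcases hn.eq_or_lt with rfl | hlt
  · rfl
  · rw [hM n (by omega), heq]

section Words

variable {H : ℕ → Type*} [∀ i, Group (H i)]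

theorem redWord_prod (w : Word H) : redWord w.prod = w.toList := by
  let : ∀ i, DecidableEq (H i) := fun _ => Classical.decEq _
  exact congrArg Word.toList (Word.equiv.apply_symm_apply w)

theorem prod_map_of_redWord (g : CoprodI H) : ((redWord g).map fun l => of l.2).prod = g := by
  let : ∀ i, DecidableEq (H i) := fun _ => Classical.decEq _
  exact Word.equiv.symm_apply_apply g

theorem redWord_one : redWord (1 : CoprodI H) = [] :=
  redWord_prod Word.empty

theorem redWord_ne_one (g : CoprodI H) : ∀ l ∈ redWord g, l.2 ≠ 1 :=
  Word.ne_one _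

theorem redWord_isChain (g : CoprodI H) : (redWord g).IsChain fun l l' => l.1 ≠ l'.1 :=
  Word.chain_ne _

theorem redWord_mul_prod_of {g : CoprodI H} {l : List (Σ i, H i)} (hl : ∀ x ∈ l, x.2 ≠ 1)
    (hchain : (redWord g ++ l).IsChain fun x y => x.1 ≠ y.1) :
    redWord (g * (l.map fun x => of x.2).prod) = redWord g ++ l := by
  have hne : ∀ x ∈ redWord g ++ l, x.2 ≠ 1 := by
    simp only [List.mem_append]
    rintro x (hx | hx)
    exacts [redWord_ne_one g x hx, hl x hx]
  have := redWord_prod ⟨redWord g ++ l, hne, hchain⟩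
  rwa [Word.prod, List.map_append, List.prod_append, prod_map_of_redWord] at this

theorem redWord_mul_commutator {g : CoprodI H} {i j : ℕ} (hij : i ≠ j) {a : H i} {b : H j}
    (ha : a ≠ 1) (hb : b ≠ 1) (hg : ∀ l ∈ (redWord g).getLast?, l.1 ≠ j) :
    redWord (g * ⁅(of b : CoprodI H), of a⁆) =
      redWord g ++ [⟨j, b⟩, ⟨i, a⟩, ⟨j, b⁻¹⟩, ⟨i, a⁻¹⟩] := by
  have key := redWord_mul_prod_of (g := g) (l := [⟨j, b⟩, ⟨i, a⟩, ⟨j, b⁻¹⟩, ⟨i, a⁻¹⟩]) ?_ ?_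
  · simpa [commutatorElement_def, mul_assoc] using key
  · simp [ha, hb]
  · rw [List.isChain_append]
    refine ⟨redWord_isChain g, ?_, fun x hx y hy => ?_⟩
    · simp [hij, hij.symm]
    · simp only [List.head?_cons, Option.mem_some_iff] at hy
      exact hy ▸ hg x hx

theorem psi_eq_self {n : ℕ} {g : CoprodI H} (hg : ∀ l ∈ redWord g, l.1 ≤ n) : psi n g = g := by
  conv_lhs => rw [← prod_map_of_redWord g]
  conv_rhs => rw [← prod_map_of_redWord g]
  rw [map_list_prod, List.map_map]
  refine congrArg _ (List.map_congr_left fun l hl => ?_)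
  simp [psi, if_pos (hg l hl)]

theorem psi_of_of_lt {n j : ℕ} (h : n < j) (b : H j) : psi n (of b) = 1 := by
  simp [psi, Nat.not_le.2 h]

end Words

section InverseLimit

variable {H : ℕ → Type*} [∀ i, Group (H i)]

theorem one_mem_invLim : (1 : ℕ → CoprodI H) ∈ invLim H :=
  ⟨fun _ _ hl => by simp [redWord_one] at hl, fun _ => map_one _⟩

theorem mem_bigG_of_eventually_const {g : invLim H} {K : ℕ} (hg : ∀ n, K ≤ n → g.1 n = g.1 K) :
    g ∈ bigG H :=
  fun _ _ => ⟨K, fun n hn => by rw [hg n hn]⟩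

instance : Nonempty (bigG H) :=
  ⟨⟨⟨1, one_mem_invLim⟩, mem_bigG_of_eventually_const (K := 0) fun _ _ => rfl⟩⟩

def splice (f : ℕ → CoprodI H) (K : ℕ) (x : CoprodI H) : ℕ → CoprodI H :=
  fun n => if n ≤ K then f n else x

theorem splice_mem_invLim {f : ℕ → CoprodI H} (hf : f ∈ invLim H) {K : ℕ} {x : CoprodI H}
    (hx : ∀ l ∈ redWord x, 1 ≤ l.1 ∧ l.1 ≤ K + 1) (hpsi : psi K x = f K) :
    splice f K x ∈ invLim H := by
  refine ⟨fun n l hl => ?_, fun n => ?_⟩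
  · by_cases hn : n ≤ K
    · simp only [splice, if_pos hn] at hl
      exact hf.1 n l hl
    · simp only [splice, if_neg hn] at hl
      exact ⟨(hx l hl).1, by have := (hx l hl).2; omega⟩
  · rcases Nat.lt_trichotomy n K with h | rfl | h
    · simpa [splice, h, h.le] using hf.2 n
    · simpa [splice] using hpsi
    · simpa [splice, Nat.not_le.2 h, Nat.not_le.2 (Nat.lt_succ_of_lt h)] using
        psi_eq_self fun l hl => (hx l hl).2.trans h

end InverseLimit

section Baire

variable {H : ℕ → Type*} [∀ i, Group (H i)]

theorem exists_invLim_kappa_one_jump [Nontrivial (H 1)] {K : ℕ} (hK : 1 ≤ K)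
    [Nontrivial (H (K + 1))] (f : invLim H) :
    ∃ g : invLim H, (∀ n ≤ K, g.1 n = f.1 n) ∧ (∀ n, K + 1 ≤ n → g.1 n = g.1 (K + 1)) ∧
      kappa 1 (g.1 (K + 1)) ≠ kappa 1 (g.1 K) := by
  obtain ⟨a, ha⟩ := exists_ne (1 : H 1)
  obtain ⟨b, hb⟩ := exists_ne (1 : H (K + 1))
  have hfK := f.2.1 K
  set x := f.1 K * ⁅(of b : CoprodI H), of a⁆
  have hx : redWord x = redWord (f.1 K) ++ [⟨K + 1, b⟩, ⟨1, a⟩, ⟨K + 1, b⁻¹⟩, ⟨1, a⁻¹⟩] :=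
    redWord_mul_commutator (by omega) ha hb fun l hl => by
      have := (hfK l (List.mem_of_mem_getLast? hl)).2
      omega
  have hpsi : psi K x = f.1 K := by
    simp [x, psi_of_of_lt (Nat.lt_succ_self K), psi_eq_self fun l hl => (hfK l hl).2]
  have hx_letters : ∀ l ∈ redWord x, 1 ≤ l.1 ∧ l.1 ≤ K + 1 := by
    intro l hl
    rw [hx, List.mem_append] at hl
    rcases hl with hl | hl
    · exact ⟨(hfK l hl).1, (hfK l hl).2.trans K.le_succ⟩
    · simp only [List.mem_cons, List.not_mem_nil, or_false] at hl
      rcases hl with rfl | rfl | rfl | rfl <;> simp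
  refine ⟨⟨splice f.1 K x, splice_mem_invLim f.2 hx_letters hpsi⟩, fun n hn => if_pos hn,
    fun n hn => by simp [splice, Nat.not_le.2 hn], ?_⟩
  have hKne : ¬ K + 1 ≤ 1 := by omega
  intro h
  simpa [splice, kappa, hx, List.filter_append, hKne] using congrArg List.length h

theorem not_mem_sigmaFiber_of_kappa_one_ne {g : invLim H} {N K : ℕ} (hNK : N ≤ K)
    (h : kappa 1 (g.1 (K + 1)) ≠ kappa 1 (g.1 K)) : g ∉ sigmaFiber H N :=
  fun hg => h ((hg.1 _ (hNK.trans K.le_succ)).trans (hg.1 K hNK).symm)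

theorem isClosed_setOf_apply_apply (P : CoprodI H → CoprodI H → Prop) (i j : ℕ) :
    IsClosed {q : invLim H | P (q.1 i) (q.1 j)} := by
  have : DiscreteTopology (CoprodI H) := ⟨rfl⟩
  have hcoord : Continuous fun q : invLim H => (q.1 i, q.1 j) :=
    ((continuous_apply i).comp continuous_subtype_val).prodMk
      ((continuous_apply j).comp continuous_subtype_val)
  exact (isClosed_discrete {p : CoprodI H × CoprodI H | P p.1 p.2}).preimage hcoord

theorem isClosed_sigmaFiber (N : ℕ) : IsClosed (sigmaFiber H N) := by
  simp only [sigmaFiber, ofPred_and, ofPred_forall]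
  exact (isClosed_iInter fun n => isClosed_iInter fun _ => isClosed_setOf_apply_apply (H := H)
      (fun x y => kappa 1 x = kappa 1 y) n N).inter
    (isClosed_setOf_apply_apply (H := H) (fun x y => N = 1 ∨ kappa 1 x ≠ kappa 1 y) (N - 1) N)

theorem dense_compl_sigmaFiber (hH : ∀ i, 1 ≤ i → Nontrivial (H i)) (N : ℕ) :
    Dense (Subtype.val ⁻¹' sigmaFiber H N : Set (bigG H))ᶜ := by
  have := hH 1 le_rfl
  intro p
  choose g hg_eq hg_const hg_jump using fun K =>
    have := hH (K + N + 2) (by omega)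
    exists_invLim_kappa_one_jump (K := K + N + 1) (by omega) p.1
  have hgG : ∀ K, g K ∈ bigG H := fun K => mem_bigG_of_eventually_const (hg_const K)
  refine mem_closure_of_tendsto (f := fun K => ⟨g K, hgG K⟩) (b := atTop) ?_
    (Eventually.of_forall fun K => not_mem_sigmaFiber_of_kappa_one_ne (by omega) (hg_jump K))
  rw [IsInducing.subtypeVal.tendsto_nhds_iff, IsInducing.subtypeVal.tendsto_nhds_iff,
    tendsto_pi_nhds]
  exact fun n => tendsto_const_nhds.congr'
    (eventually_atTop.2 ⟨n, fun K hK => (hg_eq K n (by omega)).symm⟩)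

theorem iUnion_sigmaFiber_eq_univ :
    ⋃ N, (Subtype.val ⁻¹' sigmaFiber H N : Set (bigG H)) = univ :=
  eq_univ_of_forall fun p => mem_iUnion.2 <|
    exists_stabilization_index (fun n => kappa 1 (p.1.1 n)) (p.2 1 le_rfl)

end Baire

/-- The topological group `G`, with the subspace topology inherited
from `lim← Gₙ`, is not a Baire space. -/
theorem bigG_not_baireSpace (H : ℕ → Type*) [∀ i, Group (H i)]
    (hH : ∀ i, 1 ≤ i → Nontrivial (H i)) :
    ¬ BaireSpace (bigG H) := by
  intro _
  obtain ⟨N, hN⟩ := nonempty_interior_of_iUnion_of_closed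
    (fun N => (isClosed_sigmaFiber N).preimage continuous_subtype_val)
    (iUnion_sigmaFiber_eq_univ (H := H))
  exact hN.ne_empty (interior_eq_empty_iff_dense_compl.2 (dense_compl_sigmaFiber hH N))

end
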